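/- Fix n ∈ ℕ with n ≥ 1 and suppose the curve evolves by the binormal flow ∂γ/∂t = kⁿ B (i.e. ν = μ = 0, α = kⁿ), with k and τ L-periodic in s for every t. Then the bending energy I₂(t) = ∫₀^L k(s,t)² ds satisfies dI₂/dt = ((2n−2)/(n+1)) ∫₀^L k^{n+1} (∂τ/∂s) ds; in particular dI₂/dt = 0 when n = 1. -/

import Mathlib

open scoped BigOperators RealInnerProductSpace
open Complex

noncomputable section

abbrev E3 : Type := EuclideanSpace ℝ (Fin 3)

/-- Partial derivative with respect to the first (arclength) variable. -/
noncomputable def dS {V : Type} [NormedAddCommGroup V] [NormedSpace ℝ V]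
    (F : ℝ → ℝ → V) : ℝ → ℝ → V := fun s t => deriv (fun x => F x t) s

/-- Partial derivative with respect to the second (time) variable. -/
noncomputable def dT {V : Type} [NormedAddCommGroup V] [NormedSpace ℝ V]
    (F : ℝ → ℝ → V) : ℝ → ℝ → V := fun s t => deriv (fun x => F s x) t

/-- Complexification of a real vector in `ℝ³`. -/
noncomputable def cvec (v : E3) : Fin 3 → ℂ := fun i => (v i : ℂ)

/-- Bilinear extension of the real inner product to `ℂ³`. -/
noncomputable def cip (u v : Fin 3 → ℂ) : ℂ := ∑ i, u i * v i

/-- The phase `θ(s,t) = ∫₀^s τ(s',t) ds'`. -/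
noncomputable def θf (τ : ℝ → ℝ → ℝ) : ℝ → ℝ → ℝ :=
  fun s t => ∫ x in (0:ℝ)..s, τ x t

/-- The Hasimoto wave function `ψ = k e^{iθ}`. -/
noncomputable def ψf (k τ : ℝ → ℝ → ℝ) : ℝ → ℝ → ℂ :=
  fun s t => (k s t : ℂ) * Complex.exp (Complex.I * (θf τ s t : ℂ))

/-- The complexified frame vector `M = (N + iB) e^{iθ}`. -/
noncomputable def Mf (N B : ℝ → ℝ → E3) (τ : ℝ → ℝ → ℝ) : ℝ → ℝ → (Fin 3 → ℂ) :=
  fun s t => Complex.exp (Complex.I * (θf τ s t : ℂ)) •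
    (cvec (N s t) + Complex.I • cvec (B s t))

/-- `ω = ⟨∂M/∂t, T⟩` (bilinear inner product). -/
noncomputable def ωf (T N B : ℝ → ℝ → E3) (τ : ℝ → ℝ → ℝ) : ℝ → ℝ → ℂ :=
  fun s t => cip (dT (Mf N B τ) s t) (cvec (T s t))


section helpers
variable {V : Type} [NormedAddCommGroup V] [NormedSpace ℝ V]

lemma hasDerivAt_dS (F : ℝ → ℝ → V) (hF : ContDiff ℝ (⊤ : ℕ∞) (Function.uncurry F)) (s t : ℝ) :
    HasDerivAt (fun x => F x t) (dS F s t) s := by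
  have h : DifferentiableAt ℝ (fun x : ℝ => F x t) s := by
    have h1 : DifferentiableAt ℝ (Function.uncurry F) (s, t) :=
      (hF.differentiable (by simp)).differentiableAt
    exact h1.comp s (differentiableAt_id.prodMk (differentiableAt_const t) :
      DifferentiableAt ℝ (fun x : ℝ => (x, t)) s)
  exact h.hasDerivAt

lemma hasDerivAt_dT (F : ℝ → ℝ → V) (hF : ContDiff ℝ (⊤ : ℕ∞) (Function.uncurry F)) (s t : ℝ) :
    HasDerivAt (fun x => F s x) (dT F s t) t := by
  have h : DifferentiableAt ℝ (fun x : ℝ => F s x) t := by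
    have h1 : DifferentiableAt ℝ (Function.uncurry F) (s, t) :=
      (hF.differentiable (by simp)).differentiableAt
    exact h1.comp t ((differentiableAt_const s).prodMk differentiableAt_id :
      DifferentiableAt ℝ (fun x : ℝ => (s, x)) t)
  exact h.hasDerivAt

lemma contDiff_dS (F : ℝ → ℝ → V) (hF : ContDiff ℝ (⊤ : ℕ∞) (Function.uncurry F)) :
    ContDiff ℝ (⊤ : ℕ∞) (Function.uncurry (dS F)) := by
  have h1 : ContDiff ℝ (⊤ : ℕ∞) (fun p : ℝ × ℝ => fderiv ℝ (Function.uncurry F) p ((1:ℝ), (0:ℝ))) :=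
    (hF.fderiv_right (le_refl _)).clm_apply contDiff_const
  have h2 : Function.uncurry (dS F) = fun p : ℝ × ℝ => fderiv ℝ (Function.uncurry F) p (1, 0) := by
    funext p
    obtain ⟨s, t⟩ := p
    have hd : HasFDerivAt (Function.uncurry F) (fderiv ℝ (Function.uncurry F) (s, t)) (s, t) :=
      ((hF.differentiable (by simp)).differentiableAt).hasFDerivAt
    have hin : HasDerivAt (fun x : ℝ => (x, t)) ((1:ℝ), (0:ℝ)) s :=
      (hasDerivAt_id s).prodMk (hasDerivAt_const s t)
    exact (hd.comp_hasDerivAt s hin).deriv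
  rw [h2]; exact h1

lemma contDiff_dT (F : ℝ → ℝ → V) (hF : ContDiff ℝ (⊤ : ℕ∞) (Function.uncurry F)) :
    ContDiff ℝ (⊤ : ℕ∞) (Function.uncurry (dT F)) := by
  have h1 : ContDiff ℝ (⊤ : ℕ∞) (fun p : ℝ × ℝ => fderiv ℝ (Function.uncurry F) p ((0:ℝ), (1:ℝ))) :=
    (hF.fderiv_right (le_refl _)).clm_apply contDiff_const
  have h2 : Function.uncurry (dT F) = fun p : ℝ × ℝ => fderiv ℝ (Function.uncurry F) p (0, 1) := by
    funext p
    obtain ⟨s, t⟩ := p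
    have hd : HasFDerivAt (Function.uncurry F) (fderiv ℝ (Function.uncurry F) (s, t)) (s, t) :=
      ((hF.differentiable (by simp)).differentiableAt).hasFDerivAt
    have hin : HasDerivAt (fun x : ℝ => (s, x)) ((0:ℝ), (1:ℝ)) t :=
      (hasDerivAt_const t s).prodMk (hasDerivAt_id t)
    exact (hd.comp_hasDerivAt t hin).deriv
  rw [h2]; exact h1

end helpers

theorem stmt19
    (γ T N B : ℝ → ℝ → E3) (k τ : ℝ → ℝ → ℝ)
    (hγsm : ContDiff ℝ (⊤ : ℕ∞) (Function.uncurry γ))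
    (hTsm : ContDiff ℝ (⊤ : ℕ∞) (Function.uncurry T))
    (hNsm : ContDiff ℝ (⊤ : ℕ∞) (Function.uncurry N))
    (hBsm : ContDiff ℝ (⊤ : ℕ∞) (Function.uncurry B))
    (hksm : ContDiff ℝ (⊤ : ℕ∞) (Function.uncurry k))
    (hτsm : ContDiff ℝ (⊤ : ℕ∞) (Function.uncurry τ))
    (hkpos : ∀ s t, 0 < k s t)
    (hTdef : ∀ s t, dS γ s t = T s t)
    (horth : ∀ s t, ⟪T s t, T s t⟫ = 1 ∧ ⟪N s t, N s t⟫ = 1 ∧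
      ⟪B s t, B s t⟫ = 1 ∧ ⟪T s t, N s t⟫ = 0 ∧
      ⟪T s t, B s t⟫ = 0 ∧ ⟪N s t, B s t⟫ = 0)
    (hFS1 : ∀ s t, dS T s t = k s t • N s t)
    (hFS2 : ∀ s t, dS N s t = -(k s t) • T s t + τ s t • B s t)
    (hFS3 : ∀ s t, dS B s t = -(τ s t) • N s t)
    (ν μ α : ℝ → ℝ → ℝ)
    (hνsm : ContDiff ℝ (⊤ : ℕ∞) (Function.uncurry ν))
    (hμsm : ContDiff ℝ (⊤ : ℕ∞) (Function.uncurry μ))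
    (hαsm : ContDiff ℝ (⊤ : ℕ∞) (Function.uncurry α))
    (hkin : ∀ s t, dT γ s t = ν s t • T s t + μ s t • N s t + α s t • B s t)
    (hmixγ : ∀ s t, dS (dT γ) s t = dT (dS γ) s t)
    (hmixT : ∀ s t, dS (dT T) s t = dT (dS T) s t)
    (hmixN : ∀ s t, dS (dT N) s t = dT (dS N) s t)
    (hmixB : ∀ s t, dS (dT B) s t = dT (dS B) s t)
    (n : ℕ) (hn : 1 ≤ n)
    (hν0 : ∀ s t, ν s t = 0)
    (hμ0 : ∀ s t, μ s t = 0)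
    (hαn : ∀ s t, α s t = k s t ^ n)
    (L : ℝ) (hL : 0 < L)
    (hkper : ∀ s t, k (s + L) t = k s t)
    (hτper : ∀ s t, τ (s + L) t = τ s t)
    :
    ∀ t, HasDerivAt (fun t' => ∫ s in (0:ℝ)..L, (k s t')^2)
      (((2 * (n : ℝ) - 2) / ((n : ℝ) + 1)) *
        ∫ s in (0:ℝ)..L, (k s t)^(n+1) * dS τ s t) t ∧
      (n = 1 → HasDerivAt (fun t' => ∫ s in (0:ℝ)..L, (k s t')^2) 0 t) := by
  classical
  -- time-derivative of curvature
  have hkt : ∀ s t, HasDerivAt (fun x => k s x)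
      (-(2 * (n:ℝ) * k s t ^ (n-1) * dS k s t * τ s t) - k s t ^ n * dS τ s t) t := by
    intro s t
    -- orthonormality consequences
    obtain ⟨hTT, hNN1, hBB, hTN, hTB, hNB⟩ := horth s t
    have hNT : ⟪N s t, T s t⟫ = 0 := by rw [real_inner_comm]; exact hTN
    have hBT : ⟪B s t, T s t⟫ = 0 := by rw [real_inner_comm]; exact hTB
    have hBN : ⟪B s t, N s t⟫ = 0 := by rw [real_inner_comm]; exact hNB
    -- ⟪N, dT N⟫ = 0
    have hNdTN : ⟪N s t, dT N s t⟫ = 0 := by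
      have h1 : HasDerivAt (fun x => (⟪N s x, N s x⟫ : ℝ))
          (⟪N s t, dT N s t⟫ + ⟪dT N s t, N s t⟫) t :=
        (hasDerivAt_dT N hNsm s t).inner ℝ (hasDerivAt_dT N hNsm s t)
      have hconst : (fun x => (⟪N s x, N s x⟫ : ℝ)) = fun _ => (1:ℝ) :=
        funext fun x => (horth s x).2.1
      rw [hconst] at h1
      have h2 := h1.unique (hasDerivAt_const t (1:ℝ))
      have h3 : ⟪dT N s t, N s t⟫ = ⟪N s t, dT N s t⟫ := real_inner_comm _ _
      linarith [h2, h3]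
    -- E1 : the time derivative of T
    have hE1 : ∀ x, dT T x t = (k x t ^ n) • dS B x t +
        ((n:ℝ) * k x t ^ (n-1) * dS k x t) • B x t := by
      intro x
      have h1 : dT T x t = dT (dS γ) x t := by
        show deriv (fun y => T x y) t = deriv (fun y => dS γ x y) t
        congr 1; funext y; rw [hTdef]
      rw [h1, ← hmixγ]
      have hfun : (fun y => dT γ y t) = fun y => (k y t ^ n) • B y t := by
        funext y; rw [hkin, hν0, hμ0, hαn]; simp
      have hder : HasDerivAt (fun y => (k y t ^ n) • B y t)
          ((k x t ^ n) • dS B x t + ((n:ℝ) * k x t ^ (n-1) * dS k x t) • B x t) x :=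
        HasDerivAt.smul ((hasDerivAt_dS k hksm x t).pow n) (hasDerivAt_dS B hBsm x t)
      show deriv (fun y => dT γ y t) x = _
      rw [hfun]
      exact hder.deriv
    -- derivatives in s at (s,t)
    have hk' : HasDerivAt (fun x => k x t) (dS k s t) s := hasDerivAt_dS k hksm s t
    have hτ' : HasDerivAt (fun x => τ x t) (dS τ s t) s := hasDerivAt_dS τ hτsm s t
    have hN' : HasDerivAt (fun x => N x t) (dS N s t) s := hasDerivAt_dS N hNsm s t
    have hB' : HasDerivAt (fun x => B x t) (dS B s t) s := hasDerivAt_dS B hBsm s t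
    have hdk' : HasDerivAt (fun x => dS k x t) (dS (dS k) s t) s :=
      hasDerivAt_dS (dS k) (contDiff_dS k hksm) s t
    -- dS (dT T) via hE1
    have hterm1 : HasDerivAt (fun x => (k x t ^ n) • dS B x t)
        ((k s t ^ n) • (((-(τ s t)) • dS N s t) + ((-(dS τ s t)) • N s t)) +
          ((n:ℝ) * k s t ^ (n-1) * dS k s t) • dS B s t) s := by
      have hdBfun : (fun x => dS B x t) = fun x => (-(τ x t)) • N x t := by
        funext x; rw [hFS3]
      have hdB' : HasDerivAt (fun x => dS B x t)
          (((-(τ s t)) • dS N s t) + ((-(dS τ s t)) • N s t)) s := by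
        rw [hdBfun]; exact HasDerivAt.smul hτ'.neg hN'
      exact HasDerivAt.smul (hk'.pow n) hdB'
    obtain ⟨c, hc⟩ : ∃ c, HasDerivAt (fun x => (n:ℝ) * k x t ^ (n-1) * dS k x t) c s :=
      ⟨_, ((hasDerivAt_const s ((n:ℝ))).mul (hk'.pow (n-1))).mul hdk'⟩
    have hterm2 : HasDerivAt (fun x => ((n:ℝ) * k x t ^ (n-1) * dS k x t) • B x t)
        (((n:ℝ) * k s t ^ (n-1) * dS k s t) • dS B s t + c • B s t) s :=
      hc.smul hB'
    have hdTT : dS (dT T) s t =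
        ((k s t ^ n) • (((-(τ s t)) • dS N s t) + ((-(dS τ s t)) • N s t)) +
          ((n:ℝ) * k s t ^ (n-1) * dS k s t) • dS B s t) +
        (((n:ℝ) * k s t ^ (n-1) * dS k s t) • dS B s t + c • B s t) := by
      show deriv (fun x => dT T x t) s = _
      rw [funext hE1]
      exact (hterm1.add hterm2).deriv
    -- the value of the t-derivative of k via k = ⟪dS T, N⟫
    have hfun : (fun x => k s x) = fun x => (⟪dS T s x, N s x⟫ : ℝ) := by
      funext x
      rw [hFS1, real_inner_smul_left, (horth s x).2.1, mul_one]
    have hdST : HasDerivAt (fun x => dS T s x) (dT (dS T) s t) t :=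
      hasDerivAt_dT (dS T) (contDiff_dS T hTsm) s t
    have hinner : HasDerivAt (fun x => (⟪dS T s x, N s x⟫ : ℝ))
        (⟪dS T s t, dT N s t⟫ + ⟪dT (dS T) s t, N s t⟫) t :=
      hdST.inner ℝ (hasDerivAt_dT N hNsm s t)
    have hval : ⟪dS T s t, dT N s t⟫ + ⟪dT (dS T) s t, N s t⟫ =
        -(2 * (n:ℝ) * k s t ^ (n-1) * dS k s t * τ s t) - k s t ^ n * dS τ s t := by
      have h1 : (⟪dS T s t, dT N s t⟫ : ℝ) = 0 := by
        rw [hFS1, real_inner_smul_left, hNdTN, mul_zero]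
      rw [h1, ← hmixT, hdTT, hFS2, hFS3]
      simp only [inner_add_left, real_inner_smul_left, inner_add_right,
        real_inner_smul_right, hNT, hBN, hNN1, hTN, hNB]
      ring
    rw [hfun]
    exact hval ▸ hinner
  -- continuity helpers
  have hswap : Continuous (fun p : ℝ × ℝ => (p.2, p.1)) := continuous_swap
  have hkc : Continuous (fun p : ℝ × ℝ => k p.1 p.2) := hksm.continuous
  have hτc : Continuous (fun p : ℝ × ℝ => τ p.1 p.2) := hτsm.continuous
  have hdkc : Continuous (fun p : ℝ × ℝ => dS k p.1 p.2) := (contDiff_dS k hksm).continuous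
  have hdτc : Continuous (fun p : ℝ × ℝ => dS τ p.1 p.2) := (contDiff_dS τ hτsm).continuous
  -- the derivative integrand, with (t', s) ordering
  set G : ℝ → ℝ → ℝ := fun t' s =>
    2 * k s t' * (-(2 * (n:ℝ) * k s t' ^ (n-1) * dS k s t' * τ s t') - k s t' ^ n * dS τ s t')
    with hG
  have hGc : Continuous (fun p : ℝ × ℝ => G p.1 p.2) := by
    apply Continuous.mul
    · exact continuous_const.mul (hkc.comp hswap)
    · exact ((continuous_const.mul ((hkc.comp hswap).pow _)).mul (hdkc.comp hswap)).mul
        (hτc.comp hswap) |>.neg.sub (((hkc.comp hswap).pow _).mul (hdτc.comp hswap))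
  intro t
  -- pointwise derivative of k²
  have hksq : ∀ s t', HasDerivAt (fun x => (k s x)^2) (G t' s) t' := by
    intro s t'
    have := (hkt s t').fun_pow 2
    simpa [hG, pow_one, mul_comm, mul_assoc, mul_left_comm] using this
  -- bound on compact neighbourhood
  obtain ⟨C, hC⟩ : ∃ C, ∀ p ∈ (Metric.closedBall t 1) ×ˢ (Set.uIcc (0:ℝ) L),
      ‖(fun p : ℝ × ℝ => G p.1 p.2) p‖ ≤ C :=
    ((isCompact_closedBall t 1).prod isCompact_uIcc).exists_bound_of_continuousOn
      hGc.continuousOn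
  -- differentiation under the integral sign
  have hmain : HasDerivAt (fun t' => ∫ s in (0:ℝ)..L, (k s t')^2)
      (∫ s in (0:ℝ)..L, G t s) t := by
    have hmeas : ∀ t' : ℝ, MeasureTheory.AEStronglyMeasurable (fun s => k s t' ^ 2)
        (MeasureTheory.volume.restrict (Set.uIoc (0:ℝ) L)) := by
      intro t'
      have hcc : Continuous (fun s : ℝ => k s t' ^ 2) := by
        exact (hkc.comp (continuous_id.prodMk continuous_const)).pow 2
      exact hcc.aestronglyMeasurable
    have hFint : IntervalIntegrable (fun s => k s t ^ 2) MeasureTheory.volume 0 L := by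
      apply Continuous.intervalIntegrable
      exact (hkc.comp (continuous_id.prodMk continuous_const)).pow 2
    have hF'meas : MeasureTheory.AEStronglyMeasurable (G t)
        (MeasureTheory.volume.restrict (Set.uIoc (0:ℝ) L)) := by
      have hcc : Continuous (G t) := by
        exact hGc.comp (continuous_const.prodMk continuous_id)
      exact hcc.aestronglyMeasurable
    have hbound : ∀ᵐ s ∂MeasureTheory.volume, s ∈ Set.uIoc (0:ℝ) L →
        ∀ t' ∈ Metric.ball t 1, ‖G t' s‖ ≤ (fun _ : ℝ => C) s :=
      MeasureTheory.ae_of_all _ fun s hs t' ht' =>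
        hC (t', s) ⟨Metric.ball_subset_closedBall ht', Set.uIoc_subset_uIcc hs⟩
    have hdiff : ∀ᵐ s ∂MeasureTheory.volume, s ∈ Set.uIoc (0:ℝ) L →
        ∀ t' ∈ Metric.ball t 1, HasDerivAt (fun x => k s x ^ 2) (G t' s) t' :=
      MeasureTheory.ae_of_all _ fun s _ t' _ => hksq s t'
    exact (intervalIntegral.hasDerivAt_integral_of_dominated_loc_of_deriv_le
      (F := fun t' s => (k s t')^2) (F' := G) (bound := fun _ : ℝ => C)
      (Metric.ball_mem_nhds t one_pos) (Filter.Eventually.of_forall hmeas) hFint hF'meas hbound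
      intervalIntegrable_const hdiff).2
  -- integrability facts at time t
  have hkint : ∀ m : ℕ, IntervalIntegrable (fun s => k s t ^ m * dS k s t * τ s t)
      MeasureTheory.volume 0 L := by
    intro m
    apply Continuous.intervalIntegrable
    exact (((hkc.comp (continuous_id.prodMk continuous_const)).pow m).mul
      (hdkc.comp (continuous_id.prodMk continuous_const))).mul
      (hτc.comp (continuous_id.prodMk continuous_const))
  have hDint : IntervalIntegrable (fun s => k s t ^ (n+1) * dS τ s t)
      MeasureTheory.volume 0 L := by
    apply Continuous.intervalIntegrable
    exact ((hkc.comp (continuous_id.prodMk continuous_const)).pow _).mul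
      (hdτc.comp (continuous_id.prodMk continuous_const))
  -- integration by parts
  set A : ℝ := ∫ s in (0:ℝ)..L, k s t ^ n * dS k s t * τ s t with hA
  set D : ℝ := ∫ s in (0:ℝ)..L, k s t ^ (n+1) * dS τ s t with hD
  have hIBP : ((n:ℝ) + 1) * A = -D := by
    have hv : ∀ x ∈ Set.uIcc (0:ℝ) L, HasDerivAt (fun s => k s t ^ (n+1))
        ((((n:ℕ)+1 : ℕ):ℝ) * k x t ^ n * dS k x t) x := by
      intro x _
      have := (hasDerivAt_dS k hksm x t).fun_pow (n+1)
      simpa using this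
    have hu : ∀ x ∈ Set.uIcc (0:ℝ) L, HasDerivAt (fun s => τ s t) (dS τ x t) x :=
      fun x _ => hasDerivAt_dS τ hτsm x t
    have hIBP0 := intervalIntegral.integral_mul_deriv_eq_deriv_mul hu hv
      (Continuous.intervalIntegrable (hdτc.comp (continuous_id.prodMk continuous_const)) _ _)
      (Continuous.intervalIntegrable
        ((continuous_const.mul ((hkc.comp (continuous_id.prodMk continuous_const)).pow n)).mul
          (hdkc.comp (continuous_id.prodMk continuous_const))) _ _)
    -- boundary terms vanish by periodicity
    have hbk : k L t = k 0 t := by have := hkper 0 t; rwa [zero_add] at this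
    have hbτ : τ L t = τ 0 t := by have := hτper 0 t; rwa [zero_add] at this
    have h1 : (∫ x in (0:ℝ)..L, τ x t * ((((n:ℕ)+1 : ℕ):ℝ) * k x t ^ n * dS k x t)) =
        ((n:ℝ)+1) * A := by
      rw [hA, ← intervalIntegral.integral_const_mul]
      apply intervalIntegral.integral_congr
      intro x _
      push_cast
      ring
    have h2 : (∫ x in (0:ℝ)..L, dS τ x t * k x t ^ (n+1)) = D := by
      rw [hD]
      apply intervalIntegral.integral_congr
      intro x _
      ring
    rw [h1, h2, hbk, hbτ] at hIBP0
    rw [hIBP0]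
    ring
  -- identify the integral of G with the target expression
  have hGval : (∫ s in (0:ℝ)..L, G t s) = ((2 * (n:ℝ) - 2) / ((n:ℝ) + 1)) * D := by
    have hsplit : (∫ s in (0:ℝ)..L, G t s) =
        (-(4 * (n:ℝ))) * A + (-2) * D := by
      rw [hA, hD, ← intervalIntegral.integral_const_mul, ← intervalIntegral.integral_const_mul,
        ← intervalIntegral.integral_add ((hkint n).const_mul _) (hDint.const_mul _)]
      apply intervalIntegral.integral_congr
      intro x _
      have hkk : k x t ^ (n-1) * k x t = k x t ^ n := by
        rw [← pow_succ]
        congr 1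
        omega
      have hkk2 : k x t ^ n * k x t = k x t ^ (n+1) := by rw [← pow_succ]
      simp only [hG]
      linear_combination (-(4*(n:ℝ)) * dS k x t * τ x t) * hkk + (-(2:ℝ) * dS τ x t) * hkk2
    have hne : ((n:ℝ) + 1) ≠ 0 := by positivity
    have hAval : A = -D / ((n:ℝ)+1) := by
      field_simp
      linarith [hIBP]
    rw [hsplit, hAval]
    field_simp
    ring
  constructor
  · rw [← hGval]
    rw [hD] at hGval
    rw [hGval] at hmain
    rw [← hGval] at hmain
    exact hmain
  · intro hn1
    subst hn1
    have := hGval ▸ hmain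
    simpa using this
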